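/- An allocation M is the outcome of some balanced policy if and only if M is Pareto optimal and balanced. -/

import Mathlib

open Finset
open scoped Classical

/-- The most preferred item of a nonempty finset w.r.t. a linear order
(greater means more preferred). -/
noncomputable def favorite {ι : Type} (L : LinearOrder ι) (S : Finset ι) (h : S.Nonempty) : ι :=
  @Finset.max' ι L S h

/-- Sequential allocation: process the turns in order; at each turn the agent whose
turn it is picks her most preferred item among the items not yet allocated.
Returns the list of (agent, item) picks, in order. -/
noncomputable def seqAlloc {n : ℕ} {ι : Type} [DecidableEq ι]
    (P : Fin n → LinearOrder ι) : List (Fin n) → Finset ι → List (Fin n × ι)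
  | [], _ => []
  | a :: rest, S =>
    if h : S.Nonempty then
      (a, favorite (P a) S h) :: seqAlloc P rest (S.erase (favorite (P a) S h))
    else []

/-- `M` is the outcome of the policy `π`: every item is picked by the agent that
`M` assigns it to. -/
def IsOutcome {n : ℕ} {ι : Type} [Fintype ι] [DecidableEq ι]
    (P : Fin n → LinearOrder ι) (π : List (Fin n)) (M : ι → Fin n) : Prop :=
  ∀ o : ι, (M o, o) ∈ seqAlloc P π Finset.univ

/-- The set of items that agent `a` picks under the policy `π`. -/
noncomputable def receives {n : ℕ} {ι : Type} [Fintype ι] [DecidableEq ι]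
    (P : Fin n → LinearOrder ι) (π : List (Fin n)) (a : Fin n) : Finset ι :=
  Finset.univ.filter (fun o => (a, o) ∈ seqAlloc P π Finset.univ)

/-- An allocation `M` is Pareto optimal if there is no bijection `f` of the items such
that every agent weakly prefers `f o` to `o` for each item `o` she gets, with at least
one strict preference. -/
def ParetoOptimal {n : ℕ} {ι : Type} (P : Fin n → LinearOrder ι) (M : ι → Fin n) : Prop :=
  ¬ ∃ f : ι ≃ ι, (∀ o : ι, (P (M o)).le o (f o)) ∧ (∃ o : ι, (P (M o)).lt o (f o))

/-- A policy is balanced if every agent has exactly `k` turns. -/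
def BalancedPolicy {n : ℕ} (k : ℕ) (π : List (Fin n)) : Prop :=
  ∀ a : Fin n, π.count a = k

/-- An allocation is balanced if every agent receives exactly `k` items. -/
def BalancedAlloc {n : ℕ} {ι : Type} [Fintype ι] (k : ℕ) (M : ι → Fin n) : Prop :=
  ∀ a : Fin n, (Finset.univ.filter (fun o => M o = a)).card = k

/-- A policy is recursively balanced if it splits into `k` consecutive rounds of `n`
turns each, every agent having exactly one turn in each round. -/
def RecBalanced (n k : ℕ) (π : List (Fin n)) : Prop :=
  ∃ rounds : List (List (Fin n)), rounds.length = k ∧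
    (∀ r ∈ rounds, r.length = n ∧ ∀ a : Fin n, r.count a = 1) ∧
    π = rounds.flatten

/-- A strict alternation policy: every one of the `k` rounds uses the same order `σ`
over the agents. -/
def StrictAlt (n k : ℕ) (π : List (Fin n)) : Prop :=
  ∃ σ : List (Fin n), σ.length = n ∧ (∀ a : Fin n, σ.count a = 1) ∧
    π = (List.replicate k σ).flatten

/-- A balanced alternation policy: odd-numbered rounds use the order `σ` over the agents
and even-numbered rounds use its reverse. -/
def BalAlt (n k : ℕ) (π : List (Fin n)) : Prop :=
  ∃ σ : List (Fin n), σ.length = n ∧ (∀ a : Fin n, σ.count a = 1) ∧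
    π = ((List.range k).map (fun r => if r % 2 = 0 then σ else σ.reverse)).flatten

/-- `p j i` (for `1 ≤ i ≤ k`) is the item ranked `i`-th by agent `j` among the items `M`
allocates to `j`: it is allocated to `j`, and exactly `i - 1` of the items allocated
to `j` are strictly preferred to it by agent `j`. -/
def IsRankingOf {n : ℕ} {ι : Type} [Fintype ι] (P : Fin n → LinearOrder ι) (k : ℕ)
    (M : ι → Fin n) (p : Fin n → ℕ → ι) : Prop :=
  ∀ (j : Fin n) (i : ℕ), 1 ≤ i → i ≤ k →
    M (p j i) = j ∧
    (Finset.univ.filter (fun o => M o = j ∧ (P j).lt (p j i) o)).card = i - 1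

/-- Condition 3: for all `1 ≤ t < s ≤ k` and all agents `j, j'`, agent `j` strictly
prefers `p j t` to `p j' s`. -/
def Cond3 {n : ℕ} {ι : Type} (P : Fin n → LinearOrder ι) (k : ℕ) (p : Fin n → ℕ → ι) : Prop :=
  ∀ t s : ℕ, 1 ≤ t → t < s → s ≤ k → ∀ j j' : Fin n, (P j).lt (p j' s) (p j t)

/-- The edge relation of the directed graph `G_M`: for odd `i ≤ k` an edge `a → b`
whenever `b` strictly prefers `p a i` to `p b i`, and for even `i ≤ k` an edge `a → b`
whenever `a` strictly prefers `p b i` to `p a i`. -/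
def GM {n : ℕ} {ι : Type} (P : Fin n → LinearOrder ι) (k : ℕ) (p : Fin n → ℕ → ι)
    (a b : Fin n) : Prop :=
  (∃ i : ℕ, 1 ≤ i ∧ i ≤ k ∧ i % 2 = 1 ∧ (P b).lt (p b i) (p a i)) ∨
  (∃ i : ℕ, 1 ≤ i ∧ i ≤ k ∧ i % 2 = 0 ∧ (P a).lt (p a i) (p b i))

/-- The edge relation of the directed graph `H_M`: for each `i ≤ k` an edge `a → b`
whenever `b` strictly prefers `p a i` to `p b i`. -/
def HM {n : ℕ} {ι : Type} (P : Fin n → LinearOrder ι) (k : ℕ) (p : Fin n → ℕ → ι)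
    (a b : Fin n) : Prop :=
  ∃ i : ℕ, 1 ≤ i ∧ i ≤ k ∧ (P b).lt (p b i) (p a i)

/-- The `k` most preferred items of agent `j`: those items with fewer than `k` items
strictly preferred to them by `j`. -/
noncomputable def topItems {n : ℕ} {ι : Type} [Fintype ι] (P : Fin n → LinearOrder ι)
    (k : ℕ) (j : Fin n) : Finset ι :=
  Finset.univ.filter (fun o => (Finset.univ.filter (fun o' => (P j).lt o o')).card < k)

/-- The rank of item `o` in agent `j`'s preference (the most preferred item has rank 1). -/
noncomputable def rankOf {n : ℕ} {ι : Type} [Fintype ι] (P : Fin n → LinearOrder ι)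
    (j : Fin n) (o : ι) : ℕ :=
  (Finset.univ.filter (fun o' => (P j).lt o o')).card + 1

/-! Under sequential allocation each agent receives at most as many items as she has turns, so
once all `k * n` items are picked by a policy of `k * n` turns, turn counts and bundle sizes
agree. An outcome is Pareto optimal because a weak improvement must fix the first pick (the
first picker's favourite item) and then, inductively, every later pick. Conversely, if `M` is
Pareto optimal, among any remaining items one is its owner's favourite: otherwise sending each
item to its owner's favourite would close a trading cycle. Letting that owner pick first, over
and over, is a policy with outcome `M`. -/

section SequentialAllocation

variable {n : ℕ} {ι : Type}

lemma favorite_mem (L : LinearOrder ι) {S : Finset ι} (hS : S.Nonempty) : favorite L S hS ∈ S :=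
  @Finset.max'_mem ι L S hS

lemma le_favorite (L : LinearOrder ι) {S : Finset ι} (hS : S.Nonempty) {o : ι} (ho : o ∈ S) :
    L.le o (favorite L S hS) :=
  @Finset.le_max' ι L S o ho

lemma favorite_eq_of_forall_le (L : LinearOrder ι) {S : Finset ι} (hS : S.Nonempty) {x : ι}
    (hx : x ∈ S) (hmax : ∀ o ∈ S, L.le o x) : favorite L S hS = x :=
  @le_antisymm ι L.toPartialOrder _ _ (@Finset.max'_le ι L S hS x hmax) (le_favorite L hS hx)

variable [DecidableEq ι] (P : Fin n → LinearOrder ι)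

lemma seqAlloc_cons_of_nonempty (a : Fin n) (π : List (Fin n)) {S : Finset ι} (hS : S.Nonempty) :
    seqAlloc P (a :: π) S =
      (a, favorite (P a) S hS) :: seqAlloc P π (S.erase (favorite (P a) S hS)) := by
  rw [seqAlloc, dif_pos hS]

lemma mem_of_mem_seqAlloc {π : List (Fin n)} {S : Finset ι} {a : Fin n} {o : ι}
    (h : (a, o) ∈ seqAlloc P π S) : o ∈ S := by
  induction π generalizing S with
  | nil => simp [seqAlloc] at h
  | cons b π ih =>
    by_cases hS : S.Nonempty
    · rw [seqAlloc_cons_of_nonempty P b π hS] at h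
      rcases List.mem_cons.mp h with h | h
      · obtain ⟨rfl, rfl⟩ := Prod.mk.inj h
        exact favorite_mem _ hS
      · exact Finset.mem_of_mem_erase (ih h)
    · simp [seqAlloc, hS] at h

lemma map_fst_seqAlloc_prefix (π : List (Fin n)) (S : Finset ι) :
    (seqAlloc P π S).map Prod.fst <+: π := by
  induction π generalizing S with
  | nil => simp [seqAlloc]
  | cons b π ih =>
    by_cases hS : S.Nonempty
    · rw [seqAlloc_cons_of_nonempty P b π hS, List.map_cons, List.prefix_cons_inj]
      exact ih _
    · simp [seqAlloc, hS]

lemma apply_eq_self_of_mem_seqAlloc (M : ι → Fin n) {f : ι ≃ ι}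
    (hle : ∀ o, (P (M o)).le o (f o)) {π : List (Fin n)} {S : Finset ι}
    (hout : ∀ o ∈ S, (M o, o) ∈ seqAlloc P π S) (hf : Set.MapsTo f S S) :
    ∀ o ∈ S, f o = o := by
  induction π generalizing S with
  | nil => intro o ho; simpa [seqAlloc] using hout o ho
  | cons b π ih =>
    intro o ho
    have hS : S.Nonempty := ⟨o, ho⟩
    set x := favorite (P b) S hS
    rw [seqAlloc_cons_of_nonempty P b π hS] at hout
    have hxS : x ∈ S := favorite_mem _ hS
    have hMx : M x = b := by
      rcases List.mem_cons.mp (hout x hxS) with h | h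
      · exact (Prod.ext_iff.mp h).1
      · exact absurd (mem_of_mem_seqAlloc P h) (notMem_erase x S)
    have hfx : f x = x := by
      have h₁ := hle x
      rw [hMx] at h₁
      exact @le_antisymm ι (P b).toPartialOrder _ _ (le_favorite (P b) hS (hf hxS)) h₁
    by_cases hox : o = x
    · rw [hox, hfx]
    refine ih (fun o' ho' => ?_) (fun o' ho' => ?_) o (mem_erase.mpr ⟨hox, ho⟩)
    · rcases List.mem_cons.mp (hout o' (mem_of_mem_erase ho')) with h | h
      · exact absurd (Prod.ext_iff.mp h).2 (ne_of_mem_erase ho')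
      · exact h
    · obtain ⟨hne, ho'S⟩ := mem_erase.mp ho'
      exact mem_erase.mpr ⟨fun h => hne (f.injective (h.trans hfx.symm)), hf ho'S⟩

end SequentialAllocation

lemma List.sum_count_eq_length {α : Type*} [Fintype α] [DecidableEq α] (l : List α) :
    ∑ a, l.count a = l.length := by
  simpa using Multiset.sum_count_eq_card (s := univ) (m := (l : Multiset α)) (by simp)

section Outcome

variable {n : ℕ} {ι : Type} [Fintype ι] [DecidableEq ι] {P : Fin n → LinearOrder ι}
  {π : List (Fin n)} {M : ι → Fin n}

lemma IsOutcome.paretoOptimal (hout : IsOutcome P π M) : ParetoOptimal P M := by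
  rintro ⟨f, hle, o, hlt⟩
  rw [apply_eq_self_of_mem_seqAlloc P M hle (fun o _ => hout o) (fun o _ => mem_univ (f o)) o
    (mem_univ o)] at hlt
  exact @lt_irrefl ι (P (M o)).toPreorder o hlt

lemma IsOutcome.card_fiber_le_count (hout : IsOutcome P π M) (a : Fin n) :
    #{o | M o = a} ≤ π.count a := by
  set L := seqAlloc P π univ
  calc #{o | M o = a}
      = #(({o | M o = a} : Finset ι).image (Prod.mk a)) :=
        (card_image_of_injective _ (Prod.mk_right_injective a)).symm
    _ ≤ #(L.filter (fun q => q.1 = a)).toFinset := by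
        refine card_le_card fun q hq => ?_
        obtain ⟨o, ho, rfl⟩ := mem_image.mp hq
        rw [(mem_filter.mp ho).2.symm]
        simpa using hout o
    _ ≤ (L.filter (fun q => q.1 = a)).length := List.toFinset_card_le _
    _ = (L.map Prod.fst).count a := by
        rw [List.count, List.countP_map, List.countP_eq_length_filter]
        rfl
    _ ≤ π.count a := (map_fst_seqAlloc_prefix P π univ).count_le a

lemma IsOutcome.card_fiber_eq_count (hout : IsOutcome P π M) (hlen : π.length = Fintype.card ι)
    (a : Fin n) : #{o | M o = a} = π.count a := by
  have hsum : ∑ a, #{o | M o = a} = ∑ a, π.count a := by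
    rw [← card_eq_sum_card_fiberwise fun o _ => mem_univ (M o), List.sum_count_eq_length, hlen,
      card_univ]
  exact (sum_eq_sum_iff_of_le fun a _ => hout.card_fiber_le_count a).mp hsum a (mem_univ a)

end Outcome

lemma Function.periodicPts_nonempty {α : Type*} [Finite α] [Nonempty α] (f : α → α) :
    (Function.periodicPts f).Nonempty := by
  obtain ⟨x⟩ := ‹Nonempty α›
  obtain ⟨m, m', hne, heq⟩ := Finite.exists_ne_map_eq_of_infinite fun t : ℕ => f^[t] x
  wlog hlt : m < m' generalizing m m'
  · exact this m' m hne.symm heq.symm (by omega)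
  refine ⟨f^[m] x, Function.mk_mem_periodicPts (n := m' - m) (by omega) ?_⟩
  rw [Function.IsPeriodicPt, Function.IsFixedPt, ← Function.iterate_add_apply,
    Nat.sub_add_cancel hlt.le, heq]

section ParetoOptimal

variable {n : ℕ} {ι : Type} [Fintype ι] {P : Fin n → LinearOrder ι} {M : ι → Fin n}

lemma not_paretoOptimal_of_lt_apply [Nonempty ι] (g : ι → ι)
    (hg : ∀ o ∈ Set.range g, (P (M o)).lt o (g o)) : ¬ ParetoOptimal P M := by
  -- `g` permutes its periodic points: rotate the items along these trading cycles.
  let σ : Equiv.Perm ι := Equiv.Perm.ofSubtype ((Function.bijOn_periodicPts g).equiv g)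
  have hlt : ∀ o ∈ Function.periodicPts g, (P (M o)).lt o (σ o) := fun o ho => by
    rw [Equiv.Perm.ofSubtype_apply_of_mem _ ho]
    exact hg o (Function.periodicPts_subset_range ho)
  obtain ⟨y, hy⟩ := Function.periodicPts_nonempty g
  refine not_not_intro ⟨σ, fun o => ?_, y, hlt y hy⟩
  by_cases ho : o ∈ Function.periodicPts g
  · exact @le_of_lt ι (P (M o)).toPreorder _ _ (hlt o ho)
  · rw [Equiv.Perm.ofSubtype_apply_of_not_mem _ ho]
    exact @le_refl ι (P (M o)).toPreorder o

lemma ParetoOptimal.exists_forall_le (hPO : ParetoOptimal P M) {S : Finset ι} (hS : S.Nonempty) :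
    ∃ x ∈ S, ∀ o ∈ S, (P (M x)).le o x := by
  by_contra! h
  have : Nonempty ι := ⟨hS.choose⟩
  refine not_paretoOptimal_of_lt_apply (fun o => favorite (P (M o)) S hS) ?_ hPO
  rintro _ ⟨o, rfl⟩
  obtain ⟨o', ho', hlt⟩ := h _ (favorite_mem _ hS)
  exact @lt_of_lt_of_le ι (P _).toPreorder _ _ _ hlt (le_favorite _ hS ho')

lemma ParetoOptimal.exists_seqAlloc [DecidableEq ι] (hPO : ParetoOptimal P M) (S : Finset ι) :
    ∃ π : List (Fin n), π.length = #S ∧ ∀ o ∈ S, (M o, o) ∈ seqAlloc P π S := by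
  induction S using Finset.strongInduction with
  | H S ih =>
  rcases S.eq_empty_or_nonempty with rfl | hS
  · exact ⟨[], rfl, by simp⟩
  obtain ⟨x, hx, hmax⟩ := hPO.exists_forall_le hS
  obtain ⟨π, hlen, hout⟩ := ih _ (erase_ssubset hx)
  refine ⟨M x :: π, by rw [List.length_cons, hlen, card_erase_add_one hx], fun o ho => ?_⟩
  rw [seqAlloc_cons_of_nonempty P _ π hS, favorite_eq_of_forall_le _ hS hx hmax]
  by_cases hox : o = x
  · rw [hox]
    exact List.mem_cons_self
  · exact List.mem_cons_of_mem _ (hout o (mem_erase.mpr ⟨hox, ho⟩))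

lemma ParetoOptimal.exists_isOutcome [DecidableEq ι] (hPO : ParetoOptimal P M) :
    ∃ π : List (Fin n), π.length = Fintype.card ι ∧ IsOutcome P π M := by
  obtain ⟨π, hlen, hout⟩ := hPO.exists_seqAlloc univ
  exact ⟨π, hlen, fun o => hout o (mem_univ o)⟩

end ParetoOptimal

theorem possible_assignment_balanced_general
    {ι : Type} [Fintype ι] [DecidableEq ι] {n k : ℕ}
    (hcard : Fintype.card ι = k * n)
    (P : Fin n → LinearOrder ι) (M : ι → Fin n) :
    (∃ π : List (Fin n), BalancedPolicy k π ∧ IsOutcome P π M) ↔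
      ParetoOptimal P M ∧ BalancedAlloc k M := by
  constructor
  · rintro ⟨π, hbal, hout⟩
    have hlen : π.length = Fintype.card ι := by
      rw [← List.sum_count_eq_length, Finset.sum_congr rfl fun a _ => hbal a, hcard]
      simp [mul_comm]
    exact ⟨hout.paretoOptimal, fun a => (hout.card_fiber_eq_count hlen a).trans (hbal a)⟩
  · rintro ⟨hPO, hbal⟩
    obtain ⟨π, hlen, hout⟩ := hPO.exists_isOutcome
    exact ⟨π, fun a => (hout.card_fiber_eq_count hlen a).symm.trans (hbal a), hout⟩

/-- An allocation `M` is the outcome of some balanced policy if and only if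
`M` is Pareto optimal and balanced. -/
theorem possible_assignment_balanced
    {ι : Type} [Fintype ι] [DecidableEq ι] {n k : ℕ} (hn : 0 < n) (hk : 1 ≤ k)
    (hcard : Fintype.card ι = k * n)
    (P : Fin n → LinearOrder ι) (M : ι → Fin n) :
    (∃ π : List (Fin n), BalancedPolicy k π ∧ IsOutcome P π M) ↔
      ParetoOptimal P M ∧ BalancedAlloc k M :=
  possible_assignment_balanced_general hcard P M
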